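/- If X is a γ-set then X satisfies S₁(Γ,Γ): for every sequence (U_n) of γ-covers of X one can choose V_n ∈ U_n so that {V_n : n ∈ ℕ} is a γ-cover of X. -/

import Mathlib

/-- An ω-cover of `X`: open sets, not containing `X` itself, such that every
finite subset of `X` is contained in some member. -/
def IsOmegaCover {X : Type*} [TopologicalSpace X] (U : Set (Set X)) : Prop :=
  (∀ u ∈ U, IsOpen u) ∧ Set.univ ∉ U ∧ ∀ F : Set X, F.Finite → ∃ u ∈ U, F ⊆ u

/-- A γ-cover of `X`: an infinite family of open sets such that every point
belongs to all but finitely many members. -/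
def IsGammaCover {X : Type*} [TopologicalSpace X] (U : Set (Set X)) : Prop :=
  U.Infinite ∧ (∀ u ∈ U, IsOpen u) ∧ ∀ x : X, {u ∈ U | x ∉ u}.Finite

/-- The selection principle `S₁(Ω,Γ)`. -/
def S1OmegaGamma (X : Type*) [TopologicalSpace X] : Prop :=
  ∀ U : ℕ → Set (Set X), (∀ n, IsOmegaCover (U n)) →
    ∃ V : ℕ → Set X, (∀ n, V n ∈ U n) ∧ IsGammaCover (Set.range V)

/-- `X` is a γ-set: every ω-cover contains a γ-subcover (the property `(Ω over Γ)`). -/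
def GammaSet (X : Type*) [TopologicalSpace X] : Prop :=
  ∀ U : Set (Set X), IsOmegaCover U → ∃ V ⊆ U, IsGammaCover V

/-- The selection principle `S₁(Γ,Γ)`. -/
def S1GammaGamma (X : Type*) [TopologicalSpace X] : Prop :=
  ∀ U : ℕ → Set (Set X), (∀ n, IsGammaCover (U n)) →
    ∃ V : ℕ → Set X, (∀ n, V n ∈ U n) ∧ IsGammaCover (Set.range V)

/-!
Discarding `univ`, every γ-cover is an ω-cover. Fix an injective sequence `g k` in the first
cover and apply the γ-set property to the ω-cover of all sets `g k ∩ u₀ ∩ ⋯ ∩ uₖ` with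
`uₙ ∈ Uₙ`. Since each `g k` misses a point, a γ-subcover contains only finitely many members
of depth at most `n`; choosing members `wₙ` of depth at least `n` and letting `Vₙ` be the
`n`-th factor of `wₙ` gives a sequence that eventually contains every point.
-/

open Set Filter

section

variable {X : Type*}

theorem finite_setOf_le_of_subset_of_ne_univ {Γ : Set (Set X)} {g : ℕ → Set X} {K : Set X → ℕ}
    (hΓ : ∀ x, {w ∈ Γ | x ∉ w}.Finite) (hg_ne : ∀ k, g k ≠ univ)
    (hK : ∀ w ∈ Γ, w ⊆ g (K w)) (n : ℕ) : {w ∈ Γ | K w ≤ n}.Finite := by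
  choose p hp using fun k => (ne_univ_iff_exists_notMem (g k)).1 (hg_ne k)
  refine ((finite_Iic n).biUnion fun k _ => hΓ (p k)).subset fun w ⟨hw, hwn⟩ => ?_
  exact mem_biUnion (mem_Iic.2 hwn) ⟨hw, fun hpw => hp _ (hK w hw hpw)⟩

variable [TopologicalSpace X]

namespace IsGammaCover

variable {U : Set (Set X)}

theorem mono (hU : IsGammaCover U) {V : Set (Set X)} (hVU : V ⊆ U) (hV : V.Infinite) :
    IsGammaCover V :=
  ⟨hV, fun v hv => hU.2.1 v (hVU hv), fun x => (hU.2.2 x).subset fun _ hv => ⟨hVU hv.1, hv.2⟩⟩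

theorem sdiff_singleton_univ (hU : IsGammaCover U) : IsGammaCover (U \ {univ}) :=
  hU.mono sdiff_subset (hU.1.sdiff (finite_singleton _))

theorem exists_superset_of_finite (hU : IsGammaCover U) {F : Set X} (hF : F.Finite) :
    ∃ u ∈ U, F ⊆ u := by
  have hbad : {u ∈ U | ∃ x ∈ F, x ∉ u}.Finite :=
    (hF.biUnion fun x _ => hU.2.2 x).subset fun u ⟨hu, x, hx, hxu⟩ => mem_biUnion hx ⟨hu, hxu⟩
  obtain ⟨u, hu, hFu⟩ := (hU.1.sdiff hbad).nonempty
  exact ⟨u, hu, fun x hx => by_contra fun hxu => hFu ⟨hu, x, hx, hxu⟩⟩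

theorem eventually_mem_of_injective (hU : IsGammaCover U) {g : ℕ → Set X}
    (hg : Function.Injective g) (hgU : ∀ k, g k ∈ U) (x : X) : ∀ᶠ k in atTop, x ∈ g k := by
  rw [← Nat.cofinite_eq_atTop, eventually_cofinite]
  exact (hU.2.2 x).preimage hg.injOn |>.subset fun k hk => ⟨hgU k, hk⟩

end IsGammaCover

theorem isGammaCover_range_of_eventually_mem {V : ℕ → Set X} (hopen : ∀ n, IsOpen (V n))
    (hne : ∀ n, V n ≠ univ) (hV : ∀ x, ∀ᶠ n in atTop, x ∈ V n) :
    IsGammaCover (range V) := by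
  refine ⟨fun hfin => ?_, by rintro _ ⟨n, rfl⟩; exact hopen n, fun x => ?_⟩
  · have := hfin.to_subtype
    obtain ⟨⟨A, m, rfl⟩, hA⟩ := Finite.exists_infinite_fiber (rangeFactorization V)
    have hfreq : ∃ᶠ n in atTop, V n = V m := by
      rw [Nat.frequently_atTop_iff_infinite, ← infinite_coe_iff]
      convert hA using 3
      ext n
      simp [Subtype.ext_iff, rangeFactorization]
    refine hne m (eq_univ_of_forall fun x => ?_)
    obtain ⟨n, hxn, hn⟩ := ((hV x).and_frequently hfreq).exists
    exact hn ▸ hxn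
  · have hfin : {n | x ∉ V n}.Finite := by
      simpa [← Nat.cofinite_eq_atTop, eventually_cofinite] using hV x
    exact (hfin.image V).subset fun _ ⟨⟨n, hn⟩, hxu⟩ => ⟨n, by subst hn; exact hxu, hn⟩

/-- The factor `g k` of a member of depth `k` is what forces a γ-subcover to have members of
arbitrarily large depth. -/
def diagonalCover (g : ℕ → Set X) (U : ℕ → Set (Set X)) : Set (Set X) :=
  {w | ∃ k, ∃ u : ℕ → Set X, (∀ n, u n ∈ U n) ∧ w = g k ∩ ⋂ n ≤ k, u n}

theorem isOmegaCover_diagonalCover {g : ℕ → Set X} {U : ℕ → Set (Set X)}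
    (hg_open : ∀ k, IsOpen (g k)) (hg_ne : ∀ k, g k ≠ univ) (hg : ∀ x, ∀ᶠ k in atTop, x ∈ g k)
    (hU_open : ∀ n, ∀ u ∈ U n, IsOpen u) (hU : ∀ n F, F.Finite → ∃ u ∈ U n, F ⊆ u) :
    IsOmegaCover (diagonalCover g U) := by
  refine ⟨?_, ?_, fun F hF => ?_⟩
  · rintro _ ⟨k, u, hu, rfl⟩
    exact (hg_open k).inter ((finite_Iic k).isOpen_biInter fun n _ => hU_open n _ (hu n))
  · rintro ⟨k, u, -, hw⟩
    exact hg_ne k (univ_subset_iff.1 (hw ▸ inter_subset_left))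
  · obtain ⟨k, hk⟩ := ((hF.eventually_all).2 fun x _ => hg x).exists
    choose u hu hFu using fun n => hU n F hF
    exact ⟨_, ⟨k, u, hu, rfl⟩, subset_inter hk (subset_iInter₂ fun n _ => hFu n)⟩

theorem exists_seq_eventually_mem_of_subset_diagonalCover {g : ℕ → Set X}
    {U : ℕ → Set (Set X)} (hg_ne : ∀ k, g k ≠ univ) {Γ : Set (Set X)}
    (hΓW : Γ ⊆ diagonalCover g U) (hΓ : IsGammaCover Γ) :
    ∃ V : ℕ → Set X, (∀ n, V n ∈ U n) ∧ ∀ x, ∀ᶠ n in atTop, x ∈ V n := by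
  have hrep : ∀ w ∈ Γ, ∃ k, ∃ u : ℕ → Set X, (∀ n, u n ∈ U n) ∧ w = g k ∩ ⋂ n ≤ k, u n :=
    fun w hw => hΓW hw
  choose! K u hu hw using hrep
  have hdeep : ∀ n, ∃ w ∈ Γ, n ≤ K w := fun n => by
    obtain ⟨w, hw, hwn⟩ := (hΓ.1.sdiff (finite_setOf_le_of_subset_of_ne_univ hΓ.2.2 hg_ne
      (fun w hw' => (hw w hw').symm ▸ inter_subset_left) n)).nonempty
    exact ⟨w, hw, (not_le.1 fun h => hwn ⟨hw, h⟩).le⟩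
  choose w hwΓ hwK using hdeep
  refine ⟨fun n => u (w n) n, fun n => hu _ (hwΓ n) n, fun x => ?_⟩
  obtain ⟨M, hM⟩ := ((hΓ.2.2 x).image K).bddAbove
  refine eventually_atTop.2 ⟨M + 1, fun n hn => ?_⟩
  have hxw : x ∈ w n := by_contra fun hx => by
    have := hM ⟨w n, ⟨hwΓ n, hx⟩, rfl⟩
    have := hwK n
    omega
  rw [hw _ (hwΓ n)] at hxw
  exact mem_iInter₂.1 hxw.2 n (hwK n)

end

/-- Every γ-set satisfies `S₁(Γ,Γ)`. -/
theorem gammaSet_s1GammaGamma (X : Type*) [TopologicalSpace X] (h : GammaSet X) :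
    S1GammaGamma X := by
  intro U hU
  have hU' : ∀ n, IsGammaCover (U n \ {univ}) := fun n => (hU n).sdiff_singleton_univ
  obtain ⟨g, hg_inj, hgU⟩ : ∃ g : ℕ → Set X, Function.Injective g ∧ ∀ k, g k ∈ U 0 \ {univ} :=
    let e := (hU' 0).1.natEmbedding
    ⟨fun k => e k, Subtype.val_injective.comp e.injective, fun k => (e k).2⟩
  obtain ⟨Γ, hΓW, hΓ⟩ := h _ <| isOmegaCover_diagonalCover
    (fun k => (hU' 0).2.1 _ (hgU k)) (fun k => (hgU k).2)
    ((hU' 0).eventually_mem_of_injective hg_inj hgU)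
    (fun n => (hU' n).2.1) (fun n _ hF => (hU' n).exists_superset_of_finite hF)
  obtain ⟨V, hVU, hV⟩ :=
    exists_seq_eventually_mem_of_subset_diagonalCover (fun k => (hgU k).2) hΓW hΓ
  exact ⟨V, fun n => (hVU n).1,
    isGammaCover_range_of_eventually_mem (fun n => (hU' n).2.1 _ (hVU n)) (fun n => (hVU n).2) hV⟩
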